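/- arXiv:1709.00734 — 13 statements merged into one kernel-verified Lean document; each statement's English description precedes it below -/
import Mathlib

section
/- Let G be a nontrivial finite group admitting a universal l-tuple for some positive integer l, i.e., an l-tuple (u₁,…,u_l) ∈ G^l such that for every l-tuple (g₁,…,g_l) ∈ G^l there is an endomorphism φ of G with φ(u_i) = g_i for i = 1,…,l. Then every function f : G → G agrees with some endomorphism of G on at least l elements of G, and agrees with some affine map of G (a map x ↦ g·φ(x) with φ an endomorphism) on at least l+1 elements of G. -/
/-- If a nontrivial finite group `G` has a universal `l`-tuple, then every function on `G`
agrees with some endomorphism on at least `l` elements and with some affine map on at least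
`l + 1` elements. -/
theorem stmt_2 {G : Type*} [Group G] [Fintype G] [Nontrivial G] (l : ℕ) (hl : 1 ≤ l)
    (u : Fin l → G) (hu : ∀ g : Fin l → G, ∃ φ : G →* G, ∀ i, φ (u i) = g i) :
    ∀ f : G → G,
      (∃ φ : G →* G, l ≤ Set.ncard {x | f x = φ x}) ∧
      (∃ (a : G) (φ : G →* G), l + 1 ≤ Set.ncard {x | f x = a * φ x}) := by
  obtain ⟨c, hc⟩ := exists_ne (1 : G)
  -- u is injective
  have huinj : Function.Injective u := by
    intro i j hij
    by_contra hne
    obtain ⟨φ, hφ⟩ := hu (fun k => if k = i then 1 else c)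
    have hji : j ≠ i := fun h => hne h.symm
    have h1 := hφ i
    have h2 := hφ j
    rw [if_pos rfl, hij] at h1
    rw [if_neg hji] at h2
    rw [h1] at h2
    exact hc h2.symm
  -- 1 is not in the range of u
  have hone : (1 : G) ∉ Set.range u := by
    rintro ⟨i, hi⟩
    obtain ⟨φ, hφ⟩ := hu (fun _ => c)
    have := hφ i
    rw [hi] at this
    simp at this
    exact hc this.symm
  have hrange : Set.ncard (Set.range u) = l := by
    rw [← Set.image_univ, Set.ncard_image_of_injective _ huinj, Set.ncard_univ]
    simp
  intro f
  constructor
  · obtain ⟨φ, hφ⟩ := hu (fun i => f (u i))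
    refine ⟨φ, ?_⟩
    rw [← hrange]
    exact Set.ncard_le_ncard (by rintro x ⟨i, rfl⟩; exact (hφ i).symm) (Set.toFinite _)
  · obtain ⟨φ, hφ⟩ := hu (fun i => (f 1)⁻¹ * f (u i))
    refine ⟨f 1, φ, ?_⟩
    have hsub : insert (1 : G) (Set.range u) ⊆ {x | f x = f 1 * φ x} := by
      rintro x (rfl | ⟨i, rfl⟩)
      · simp
      · simp [hφ i]
    calc l + 1 = Set.ncard (insert (1 : G) (Set.range u)) := by
              rw [Set.ncard_insert_of_notMem hone (Set.toFinite _), hrange]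
      _ ≤ _ := Set.ncard_le_ncard hsub (Set.toFinite _)
end

section
/- Let G be a finite group. The following are equivalent: (1) every function f : G → G agrees with some endomorphism of G at at least one point; (2) G has a universal element, i.e., an element u such that for every g ∈ G there is an endomorphism φ of G with φ(u) = g. -/
/-- For a finite group `G`: every function on `G` agrees with some endomorphism at some
point iff `G` has a universal element. -/
theorem stmt_5 {G : Type*} [Group G] [Fintype G] :
    (∀ f : G → G, ∃ (φ : G →* G) (x : G), f x = φ x) ↔
    (∃ u : G, ∀ g : G, ∃ φ : G →* G, φ u = g) := by
  constructor
  · intro h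
    by_contra hu
    push_neg at hu
    choose g hg using hu
    obtain ⟨φ, x, hx⟩ := h g
    exact hg x φ hx.symm
  · rintro ⟨u, hu⟩ f
    obtain ⟨φ, hφ⟩ := hu (f u)
    exact ⟨φ, u, hφ.symm⟩
end

section
/- Let M be a nonempty finite set and 𝒫 a partition of M. Call a function f : M → M 𝒫-avoiding if for every x ∈ M, x and f(x) lie in different partition classes of 𝒫. Then the following are equivalent: (1) some class of 𝒫 has more than |M|/2 elements; (2) there is no 𝒫-avoiding permutation of M. -/
/-!
If a class `P` has more than `|M|/2` elements, an injective map cannot send all of `P` into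
its complement, which is too small. Conversely, if every class has at most `|M|/2` elements,
Hall's marriage theorem gives a permutation with `f x` outside the class of `x`: a set `A`
meeting two classes has every element of `M` outside the class of one of its members, and a
set inside one class `P` is no larger than `P`, hence no larger than `Pᶜ`.
-/

open Finset

theorem Function.Injective.exists_mem_apply_mem_of_card_lt_two_mul_ncard {M : Type*} [Finite M]
    {f : M → M} (hf : f.Injective) {P : Set M} (hP : Nat.card M < 2 * P.ncard) :
    ∃ x ∈ P, f x ∈ P := by
  by_contra! hPc
  have himage : f '' P ⊆ Pᶜ := by
    rintro _ ⟨x, hx, rfl⟩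
    exact hPc x hx
  have hle : P.ncard ≤ Pᶜ.ncard :=
    Set.ncard_image_of_injective P hf ▸ Set.ncard_le_ncard himage
  have hsum : P.ncard + Pᶜ.ncard = Nat.card M := Set.ncard_add_ncard_compl P
  omega

namespace Setoid

variable {M : Type*} [Fintype M] (r : Setoid M) [DecidableRel r]

theorem card_le_card_filter_exists_not_rel
    (hr : ∀ x, 2 * #{y | r x y} ≤ Fintype.card M) (A : Finset M) :
    #A ≤ #{b | ∃ a ∈ A, ¬ r a b} := by
  by_cases hA : ∃ a ∈ A, ∃ a' ∈ A, ¬ r a a'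
  · obtain ⟨a, ha, a', ha', hnot⟩ := hA
    have huniv : ({b | ∃ a ∈ A, ¬ r a b} : Finset M) = univ := by
      refine eq_univ_of_forall fun b => mem_filter.2 ⟨mem_univ b, ?_⟩
      by_contra! hb
      exact hnot (r.trans (hb a ha) (r.symm (hb a' ha')))
    rw [huniv]
    exact card_le_univ A
  · push Not at hA
    obtain rfl | ⟨a, ha⟩ := A.eq_empty_or_nonempty
    · simp
    have hA_class : #A ≤ #{y | r a y} :=
      card_le_card fun y hy => mem_filter.2 ⟨mem_univ y, hA a ha y hy⟩
    have hcompl : #{y | ¬ r a y} ≤ #{b | ∃ a ∈ A, ¬ r a b} :=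
      card_le_card fun y hy => mem_filter.2 ⟨mem_univ y, a, ha, (mem_filter.1 hy).2⟩
    have hsplit : #{y | r a y} + #{y | ¬ r a y} = Fintype.card M :=
      card_filter_add_card_filter_not _
    have := hr a
    omega

theorem exists_perm_forall_not_rel (hr : ∀ x, 2 * #{y | r x y} ≤ Fintype.card M) :
    ∃ f : Equiv.Perm M, ∀ x, ¬ r x (f x) := by
  obtain ⟨f, hf_inj, hf⟩ := (Fintype.all_card_le_filter_rel_iff_exists_injective
    fun a b => ¬ r a b).1 (r.card_le_card_filter_exists_not_rel hr)
  exact ⟨Equiv.ofBijective f hf_inj.bijective_of_finite, hf⟩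

end Setoid

theorem stmt_6_general {M : Type*} [Fintype M] (C : Set (Set M))
    (hC : Setoid.IsPartition C) :
    (∃ P ∈ C, Fintype.card M < 2 * P.ncard) ↔
    ¬∃ f : Equiv.Perm M, ∀ x : M, ∀ P ∈ C, x ∈ P → f x ∉ P := by
  classical
  constructor
  · rintro ⟨P, hPC, hP⟩ ⟨f, hf⟩
    obtain ⟨x, hx, hfx⟩ := f.injective.exists_mem_apply_mem_of_card_lt_two_mul_ncard
      (Nat.card_eq_fintype_card (α := M) ▸ hP)
    exact hf x P hPC hx hfx
  · intro hno
    by_contra! hsmall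
    let r := Setoid.mkClasses C hC.2
    have hclass_le (x : M) : 2 * #{y | r x y} ≤ Fintype.card M := by
      have := hsmall _ (Setoid.eqv_class_mem' hC.2 (x := x))
      rwa [← Set.ncard_coe_finset, coe_filter_univ]
    obtain ⟨f, hf⟩ := r.exists_perm_forall_not_rel hclass_le
    refine hno ⟨f, fun x P hP hx hfx => hf x ?_⟩
    rw [Setoid.eq_eqv_class_of_mem hC.2 hP hx] at hfx
    exact r.symm hfx

/-- For a partition `C` of a nonempty finite set `M`: some class of `C` has more than
`|M|/2` elements iff there is no permutation `f` of `M` such that `x` and `f x` always lie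
in different classes. -/
theorem stmt_6 {M : Type*} [Fintype M] [Nonempty M] (C : Set (Set M))
    (hC : Setoid.IsPartition C) :
    (∃ P ∈ C, Fintype.card M < 2 * P.ncard) ↔
    ¬∃ f : Equiv.Perm M, ∀ x : M, ∀ P ∈ C, x ∈ P → f x ∉ P :=
  stmt_6_general C hC
end

section
/- Let M be a nonempty finite set and 𝒫 a partition of M in which every class has at most |M|/2 elements. Then there exists a permutation f of M such that for all x ∈ M, the elements x and f(x) lie in different classes of 𝒫. -/
/-- If every class of a partition `C` of a nonempty finite set `M` has at most `|M|/2`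
elements, then there is a permutation `f` of `M` such that `x` and `f x` always lie in
different classes of `C`. -/
theorem stmt_7 {M : Type*} [Fintype M] [Nonempty M] (C : Set (Set M))
    (hC : Setoid.IsPartition C) (hsmall : ∀ P ∈ C, 2 * P.ncard ≤ Fintype.card M) :
    ∃ f : Equiv.Perm M, ∀ x : M, ∀ P ∈ C, x ∈ P → f x ∉ P := by
  classical
  have hcl : ∀ x : M, ∃ P, (P ∈ C ∧ x ∈ P) ∧ ∀ Q, Q ∈ C ∧ x ∈ Q → Q = P := by
    intro x
    obtain ⟨P, hP, hu⟩ := hC.2 x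
    exact ⟨P, hP, hu⟩
  choose cl hcl1 hcl2 using hcl
  have hmemC : ∀ x, cl x ∈ C := fun x => (hcl1 x).1
  have hmem : ∀ x, x ∈ cl x := fun x => (hcl1 x).2
  have huniq : ∀ x P, P ∈ C → x ∈ P → P = cl x := fun x P h1 h2 => hcl2 x P ⟨h1, h2⟩
  -- classes of different representatives are disjoint or equal
  have hdisj : ∀ x y : M, cl x ≠ cl y → ∀ z, z ∈ cl x → z ∉ cl y := by
    intro x y hne z hzx hzy
    exact hne ((huniq z _ (hmemC x) hzx).symm ▸ (huniq z _ (hmemC y) hzy).symm ▸ rfl)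
  set n := Fintype.card M with hn
  -- the target sets for Hall's theorem
  set t : M → Finset M := fun x => ((cl x)ᶜ).toFinset with ht
  have hcard : ∀ x, (t x).card = n - (cl x).ncard := by
    intro x
    rw [ht]
    simp only [Set.toFinset_compl, Finset.card_compl]
    rw [Set.ncard_eq_toFinset_card' (cl x)]
  have hall : ∀ s : Finset M, s.card ≤ (s.biUnion t).card := by
    intro s
    rcases s.eq_empty_or_nonempty with rfl | ⟨x, hx⟩
    · simp
    by_cases hone : ∀ y ∈ s, cl y = cl x
    · -- all in one class
      have hsub : s ⊆ (cl x).toFinset := by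
        intro y hy
        rw [Set.mem_toFinset]
        exact (hone y hy) ▸ hmem y
      have h1 : s.card ≤ (cl x).ncard := by
        rw [Set.ncard_eq_toFinset_card' (cl x)]
        exact Finset.card_le_card hsub
      have h2 : 2 * (cl x).ncard ≤ n := hsmall _ (hmemC x)
      have h3 : (cl x).ncard ≤ n - (cl x).ncard := by omega
      calc s.card ≤ (cl x).ncard := h1
        _ ≤ n - (cl x).ncard := h3
        _ = (t x).card := (hcard x).symm
        _ ≤ (s.biUnion t).card := Finset.card_le_card (by
            intro z hz
            exact Finset.mem_biUnion.mpr ⟨x, hx, hz⟩)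
    · push_neg at hone
      obtain ⟨y, hy, hne⟩ := hone
      have : s.biUnion t = Finset.univ := by
        apply Finset.eq_univ_of_forall
        intro z
        by_cases hz : z ∈ cl x
        · refine Finset.mem_biUnion.mpr ⟨y, hy, ?_⟩
          rw [ht]
          simp only [Set.toFinset_compl, Finset.mem_compl, Set.mem_toFinset]
          exact fun h => hdisj x y (fun e => hne e.symm) z hz h
        · refine Finset.mem_biUnion.mpr ⟨x, hx, ?_⟩
          rw [ht]
          simp only [Set.toFinset_compl, Finset.mem_compl, Set.mem_toFinset]
          exact hz
      rw [this]
      exact Finset.card_le_card (Finset.subset_univ s)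
  obtain ⟨f, hfinj, hft⟩ := (Finset.all_card_le_biUnion_card_iff_exists_injective t).mp hall
  have hbij : Function.Bijective f := (Finite.injective_iff_bijective).mp hfinj
  refine ⟨Equiv.ofBijective f hbij, ?_⟩
  intro x P hP hxP
  have hPcl : P = cl x := huniq x P hP hxP
  have := hft x
  rw [ht] at this
  simp only [Set.mem_toFinset, Set.mem_compl_iff] at this
  simpa [Equiv.ofBijective, hPcl] using this
end

section
/- Let G be a nontrivial finite group with a dominating automorphism orbit, i.e., an orbit O of the natural action of Aut(G) on G with O ≠ {1} and |O| > (|G| − 1)/2. Then every function f : G → G agrees with some affine map of G on at least 2 elements of G. -/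
/-- If a nontrivial finite group `G` has a dominating automorphism orbit (a nontrivial
orbit of the natural `Aut(G)`-action on `G` of size exceeding `(|G| - 1)/2`), then every
function on `G` agrees with some affine map on at least 2 elements. -/
theorem stmt_8 {G : Type*} [Group G] [Fintype G] [Nontrivial G] (u : G) (hu : u ≠ 1)
    (hdom : Fintype.card G - 1 < 2 * Set.ncard (MulAction.orbit (MulAut G) u)) :
    ∀ f : G → G, ∃ (a : G) (φ : G →* G), 2 ≤ Set.ncard {x | f x = a * φ x} := by
  classical
  intro f
  by_cases hinj : Function.Injective f
  · -- pigeonhole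
    set Orb := MulAction.orbit (MulAut G) u with hOrb
    let O : Finset G := Orb.toFinset
    let S : Finset G := O.image (fun v => (f 1)⁻¹ * f v)
    have hOcard : O.card = Orb.ncard := (Set.ncard_eq_toFinset_card' Orb).symm
    have hone : ∀ v ∈ O, v ≠ 1 := by
      intro v hv
      rw [Set.mem_toFinset] at hv
      obtain ⟨σ, rfl⟩ := hv
      simpa using fun h => hu ((MulEquiv.map_eq_one_iff σ).mp h)
    have hScard : S.card = O.card := by
      apply Finset.card_image_of_injective
      intro a b hab
      exact hinj (by simpa using mul_left_cancel hab)
    have hOsub : O ⊆ Finset.univ.erase 1 := by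
      intro v hv; exact Finset.mem_erase.mpr ⟨hone v hv, Finset.mem_univ v⟩
    have hSsub : S ⊆ Finset.univ.erase 1 := by
      intro w hw
      obtain ⟨v, hv, rfl⟩ := Finset.mem_image.mp hw
      refine Finset.mem_erase.mpr ⟨?_, Finset.mem_univ _⟩
      intro h
      exact hone v hv (hinj (inv_injective (mul_eq_one_iff_eq_inv.mp h)).symm) |>.elim
    have hne : (O ∩ S).Nonempty := by
      by_contra hcon
      rw [Finset.not_nonempty_iff_eq_empty] at hcon
      have hdisj : Disjoint O S := Finset.disjoint_iff_inter_eq_empty.mpr hcon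
      have h1 : (O ∪ S).card = O.card + S.card := Finset.card_union_of_disjoint hdisj
      have h2 : (O ∪ S).card ≤ (Finset.univ.erase (1:G)).card :=
        Finset.card_le_card (Finset.union_subset hOsub hSsub)
      have h3 : (Finset.univ.erase (1:G)).card = Fintype.card G - 1 := by
        rw [Finset.card_erase_of_mem (Finset.mem_univ _), Finset.card_univ]
      omega
    obtain ⟨w, hw⟩ := hne
    have hwO : w ∈ Orb := Set.mem_toFinset.mp (Finset.mem_of_mem_inter_left hw)
    obtain ⟨v0, hvO, hveq⟩ := Finset.mem_image.mp (Finset.mem_of_mem_inter_right hw)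
    have hvOrb : v0 ∈ Orb := Set.mem_toFinset.mp hvO
    -- w ∈ orbit of v0, so ∃ φ, φ • v0 = w
    have : w ∈ MulAction.orbit (MulAut G) v0 := by
      rw [MulAction.orbit_eq_iff.mpr hvOrb]; exact hwO
    obtain ⟨φ, hφ⟩ := this
    refine ⟨f 1, (φ : MulAut G).toMonoidHom, ?_⟩
    have hφ' : φ v0 = (f 1)⁻¹ * f v0 := by rw [hveq]; exact hφ
    have hmem : ({1, v0} : Set G) ⊆ {x | f x = f 1 * φ x} := by
      intro x hx
      rcases hx with rfl | rfl
      · simp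
      · simp only [Set.mem_setOf_eq, hφ', mul_inv_cancel_left]
    have hv1 : (1:G) ≠ v0 := fun h => hone v0 hvO h.symm
    calc 2 = ({1, v0} : Set G).ncard := (Set.ncard_pair hv1).symm
      _ ≤ Set.ncard {x | f x = f 1 * φ x} :=
          Set.ncard_le_ncard hmem (Set.toFinite _)
  · -- f not injective: use a constant map
    rw [Function.not_injective_iff] at hinj
    obtain ⟨x, y, hxy, hne⟩ := hinj
    refine ⟨f x, 1, ?_⟩
    have hmem : ({x, y} : Set G) ⊆ {z | f z = f x * (1 : G →* G) z} := by
      intro z hz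
      rcases hz with rfl | rfl
      · simp
      · simp [← hxy]
    calc 2 = ({x, y} : Set G).ncard := (Set.ncard_pair hne).symm
      _ ≤ _ := Set.ncard_le_ncard hmem (Set.toFinite _)
end

section
/- In the alternating group Alt₄, the set of elements of order 3 forms a single automorphism orbit of size 8, which is more than (|Alt₄| − 1)/2 = 11/2. Consequently, every function f : Alt₄ → Alt₄ agrees with some affine map of Alt₄ on at least 2 elements. -/
namespace Stmt10Aux

abbrev G := alternatingGroup (Fin 4)

def u : G := ⟨Equiv.swap 0 1 * Equiv.swap 1 2, by
  rw [Equiv.Perm.mem_alternatingGroup]; decide⟩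

lemma horder (g : G) : orderOf g = 3 ↔ g ^ 3 = 1 ∧ g ≠ 1 := by
  constructor
  · intro h
    refine ⟨by rw [← h]; exact pow_orderOf_eq_one g, fun h1 => by simp [h1] at h⟩
  · rintro ⟨h1, h2⟩
    haveI : Fact (Nat.Prime 3) := ⟨by norm_num⟩
    exact orderOf_eq_prime h1 h2

lemma key : ∀ g : G, g ^ 3 = 1 → g ≠ 1 →
    ∃ σ : Equiv.Perm (Fin 4), MulAut.conjNormal σ u = g := by decide

def S : Finset G := Finset.univ.filter (fun g => g ^ 3 = 1 ∧ g ≠ 1)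

lemma hSet : {g : G | orderOf g = 3} = ↑S := by
  ext g; simp [S, horder]

lemma two_le_ncard {s : Set G} {x y : G} (hxy : x ≠ y) (hx : x ∈ s) (hy : y ∈ s) :
    2 ≤ Set.ncard s := by
  have h : ({x, y} : Set G) ⊆ s := by
    intro z hz; rcases hz with h | h <;> simp_all
  calc 2 = Set.ncard ({x, y} : Set G) := (Set.ncard_pair hxy).symm
    _ ≤ Set.ncard s := Set.ncard_le_ncard h (Set.toFinite s)

lemma orbit_eq : MulAction.orbit (MulAut G) u = {g : G | orderOf g = 3} := by
  ext g
  constructor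
  · rintro ⟨φ, rfl⟩
    have : orderOf ((φ : MulAut G) • u) = orderOf u := by
      rw [MulAut.smul_def]
      exact orderOf_injective (φ : MulAut G).toMonoidHom (MulEquiv.injective _) u
    rw [Set.mem_setOf_eq, this, horder]
    constructor
    · decide
    · decide
  · intro hg
    rw [Set.mem_setOf_eq, horder] at hg
    obtain ⟨σ, hσ⟩ := key g hg.1 hg.2
    exact ⟨MulAut.conjNormal σ, hσ⟩

lemma pigeonhole (g : G → G) (hg : Function.Injective g) (hg1 : g 1 = 1) :
    ∃ x : G, (x ^ 3 = 1 ∧ x ≠ 1) ∧ ((g x) ^ 3 = 1 ∧ g x ≠ 1) := by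
  by_contra hcon
  have himg : S.image g ⊆ (insert (1 : G) S)ᶜ := by
    intro y hy
    obtain ⟨x, hx, rfl⟩ := Finset.mem_image.mp hy
    rw [S, Finset.mem_filter] at hx
    have hne1 : g x ≠ 1 := fun h => hx.2.2 (hg (h.trans hg1.symm))
    simp only [Finset.mem_compl, Finset.mem_insert, not_or]
    refine ⟨hne1, ?_⟩
    rw [S, Finset.mem_filter]
    intro hmem
    exact hcon ⟨x, ⟨hx.2.1, hx.2.2⟩, hmem.2.1, hne1⟩
  have h1 : (S.image g).card = 8 := by
    rw [Finset.card_image_of_injective _ hg]; decide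
  have h2 : ((insert (1 : G) S)ᶜ).card = 3 := by decide
  have := Finset.card_le_card himg
  omega

end Stmt10Aux

open Stmt10Aux in
/-- In `Alt₄`, the elements of order 3 form a single automorphism orbit of size 8
(dominating since `8 > (12 - 1)/2`); consequently every function on `Alt₄` agrees with
some affine map on at least 2 elements. -/
theorem stmt_10 :
    (∃ u : alternatingGroup (Fin 4),
      MulAction.orbit (MulAut (alternatingGroup (Fin 4))) u =
        {g : alternatingGroup (Fin 4) | orderOf g = 3}) ∧
    Set.ncard {g : alternatingGroup (Fin 4) | orderOf g = 3} = 8 ∧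
    Fintype.card (alternatingGroup (Fin 4)) - 1 < 2 * 8 ∧
    ∀ f : alternatingGroup (Fin 4) → alternatingGroup (Fin 4),
      ∃ (a : alternatingGroup (Fin 4))
        (φ : alternatingGroup (Fin 4) →* alternatingGroup (Fin 4)),
        2 ≤ Set.ncard {x | f x = a * φ x} := by
  refine ⟨⟨u, orbit_eq⟩, ?_, ?_, ?_⟩
  · rw [hSet, Set.ncard_coe_finset]; decide
  · decide
  · intro f
    by_cases hinj : Function.Injective f
    · -- f injective
      set g : G → G := fun x => (f 1)⁻¹ * f x with hgdef
      have hginj : Function.Injective g := fun x y h => hinj (by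
        have := h; simp only [hgdef] at this; exact mul_left_cancel this)
      have hg1 : g 1 = 1 := by simp [hgdef]
      obtain ⟨x, hx, hgx⟩ := pigeonhole g hginj hg1
      -- x and g x both lie in the orbit of u
      have hxo : x ∈ MulAction.orbit (MulAut G) u := by
        rw [orbit_eq, Set.mem_setOf_eq, horder]; exact hx
      have hgxo : g x ∈ MulAction.orbit (MulAut G) u := by
        rw [orbit_eq, Set.mem_setOf_eq, horder]; exact hgx
      obtain ⟨φ₁, hφ₁⟩ := hxo
      obtain ⟨φ₂, hφ₂⟩ := hgxo
      have hφ₁' : φ₁ • u = x := hφ₁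
      have hφ₂' : φ₂ • u = g x := hφ₂
      set ψ : MulAut G := φ₂ * φ₁⁻¹ with hψ
      have h1 : φ₁⁻¹ • x = u := by rw [inv_smul_eq_iff, hφ₁']
      have hψx : ψ x = g x := by
        show (φ₂ * φ₁⁻¹) • x = g x
        rw [mul_smul, h1, hφ₂']
      refine ⟨f 1, ψ.toMonoidHom, two_le_ncard (x := (1 : G)) (y := x) ?_ ?_ ?_⟩
      · exact fun h => hx.2 h.symm
      · show f 1 = f 1 * ψ.toMonoidHom 1
        simp
      · show f x = f 1 * ψ.toMonoidHom x
        show f x = f 1 * ψ x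
        rw [hψx, hgdef]
        simp [mul_assoc]
    · -- f not injective: use the trivial endomorphism
      rw [Function.not_injective_iff] at hinj
      obtain ⟨x, y, hfxy, hxy⟩ := hinj
      refine ⟨f x, 1, two_le_ncard (x := x) (y := y) hxy ?_ ?_⟩
      · show f x = f x * (1 : G →* G) x; simp
      · show f y = f x * (1 : G →* G) y; simp [hfxy]
end

section
/- For every n ≥ 3, the n reflections in the dihedral group D₂ₙ of order 2n form a single automorphism orbit, and n > (2n − 1)/2. Consequently, every function f : D₂ₙ → D₂ₙ agrees with some affine map on at least 2 elements. -/
/-!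
If `O` is a dominating automorphism orbit and `f : G → G`, either `(f 1)⁻¹ * f x ∈ O` for some
`x ∈ O`, and an automorphism carrying `x` there gives an affine map agreeing with `f` at `1` and
`x`; or `x ↦ (f 1)⁻¹ * f x` maps the `|O| + 1` elements of `O ∪ {1}` into the complement of `O`,
which has at most `|O|` elements, so `f` takes some value twice and a constant map does the job.

In `D₂ₙ` with `n ≥ 3` the reflections are exactly the non-central involutions, a set preserved by
automorphisms, and the shifts `sr i ↦ sr (i + c)` act transitively on them: an orbit of size `n`.
-/

open MulAction

theorem exists_affine_two_le_ncard_agree_of_dominating_orbit {G : Type*} [Group G] [Finite G]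
    {u : G} (hu : u ≠ 1) (hdom : Nat.card G ≤ 2 * (orbit (MulAut G) u).ncard) (f : G → G) :
    ∃ (a : G) (φ : G →* G), 2 ≤ {x | f x = a * φ x}.ncard := by
  set O := orbit (MulAut G) u
  have one_notMem : (1 : G) ∉ O := by
    rintro ⟨σ, hσ⟩
    exact hu (σ.injective (by simpa [MulAut.smul_def] using hσ))
  by_cases h : ∃ x ∈ O, (f 1)⁻¹ * f x ∈ O
  · obtain ⟨x, hx, hfx⟩ := h
    obtain ⟨σ, hσ : σ • x = _⟩ : (f 1)⁻¹ * f x ∈ orbit (MulAut G) x := by rwa [orbit_eq_iff.mpr hx]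
    refine ⟨f 1, σ.toMonoidHom, (Set.one_lt_ncard_iff).mpr ⟨1, x, by simp, ?_, ?_⟩⟩
    · show f x = f 1 * σ x
      rw [← MulAut.smul_def, hσ, mul_inv_cancel_left]
    · rintro rfl
      exact one_notMem hx
  · push Not at h
    have maps_to : ∀ x ∈ insert 1 O, (f 1)⁻¹ * f x ∈ Oᶜ := by
      rintro x (rfl | hx)
      · simpa using one_notMem
      · exact h x hx
    have card_lt : Oᶜ.ncard < (insert 1 O).ncard := by
      have := Set.ncard_add_ncard_compl O
      rw [Set.ncard_insert_of_notMem one_notMem]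
      omega
    obtain ⟨x, -, y, -, hxy, hfxy⟩ := Set.exists_ne_map_eq_of_ncard_lt_of_maps_to card_lt maps_to
    refine ⟨f x, 1, (Set.one_lt_ncard_iff).mpr ⟨x, y, by simp, ?_, hxy⟩⟩
    simp [mul_left_cancel hfxy]

namespace DihedralGroup

variable {n : ℕ}

/-- Inner automorphisms only shift reflections by even amounts, so for even `n` this outer one is
needed for transitivity. -/
def srShift (c : ZMod n) : DihedralGroup n ≃* DihedralGroup n where
  toFun
    | r i => r i
    | sr i => sr (i + c)
  invFun
    | r i => r i
    | sr i => sr (i - c)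
  left_inv x := by cases x <;> simp
  right_inv x := by cases x <;> simp
  map_mul' x y := by
    cases x <;> cases y <;> simp only [r_mul_r, r_mul_sr, sr_mul_r, sr_mul_sr] <;> ring_nf

@[simp]
theorem srShift_sr (c i : ZMod n) : srShift c (sr i) = sr (i + c) := rfl

theorem r_mem_center_of_add_self_eq_zero {j : ZMod n} (hj : j + j = 0) :
    r j ∈ Set.center (DihedralGroup n) := by
  rw [Semigroup.mem_center_iff]
  rintro (i | i)
  · rw [r_mul_r, r_mul_r, add_comm]
  · rw [r_mul_sr, sr_mul_r, sub_eq_add_neg, ← eq_neg_of_add_eq_zero_left hj]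

theorem sr_notMem_center (h2 : (2 : ZMod n) ≠ 0) (i : ZMod n) :
    sr i ∉ Set.center (DihedralGroup n) := by
  rw [Semigroup.mem_center_iff]
  intro h
  have := h (r 1)
  rw [r_mul_sr, sr_mul_r, sr.injEq] at this
  exact h2 (by linear_combination -this)

theorem exists_mulAut_apply_sr_eq_sr (h2 : (2 : ZMod n) ≠ 0) (σ : MulAut (DihedralGroup n))
    (i : ZMod n) : ∃ j, σ (sr i) = sr j := by
  rcases hσ : σ (sr i) with j | j
  · have hj : r (j + j) = r 0 := by
      rw [← r_mul_r, ← hσ, ← map_mul, sr_mul_self, map_one, one_def]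
    have := r_mem_center_of_add_self_eq_zero (r.inj hj)
    rw [← hσ, MulEquivClass.apply_mem_center_iff] at this
    exact absurd this (sr_notMem_center h2 i)
  · exact ⟨j, rfl⟩

theorem orbit_sr_zero (h2 : (2 : ZMod n) ≠ 0) :
    orbit (MulAut (DihedralGroup n)) (sr (0 : ZMod n)) = Set.range sr := by
  ext x
  constructor
  · rintro ⟨σ, rfl⟩
    obtain ⟨j, hj⟩ := exists_mulAut_apply_sr_eq_sr h2 σ 0
    exact ⟨j, hj.symm⟩
  · rintro ⟨i, rfl⟩
    exact ⟨srShift i, by simp [MulAut.smul_def]⟩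

theorem ncard_range_sr : (Set.range (sr : ZMod n → DihedralGroup n)).ncard = n := by
  rw [Set.ncard_range_of_injective (fun _ _ => sr.inj), Nat.card_zmod]

end DihedralGroup

open DihedralGroup

/-- For `n ≥ 3`, the `n` reflections of the dihedral group `D₂ₙ` form a single
automorphism orbit, which is dominating; consequently every function on `D₂ₙ` agrees with
some affine map on at least 2 elements. -/
theorem stmt_11 (n : ℕ) (hn : 3 ≤ n) :
    (∃ u : DihedralGroup n,
      MulAction.orbit (MulAut (DihedralGroup n)) u =
        {x : DihedralGroup n | ∃ i, x = DihedralGroup.sr i}) ∧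
    Set.ncard {x : DihedralGroup n | ∃ i, x = DihedralGroup.sr i} = n ∧
    2 * n - 1 < 2 * n ∧
    ∀ f : DihedralGroup n → DihedralGroup n,
      ∃ (a : DihedralGroup n) (φ : DihedralGroup n →* DihedralGroup n),
        2 ≤ Set.ncard {x | f x = a * φ x} := by
  have : NeZero n := ⟨by omega⟩
  have two_ne_zero : (2 : ZMod n) ≠ 0 := by
    exact_mod_cast (ZMod.natCast_eq_zero_iff 2 n).not.mpr (Nat.not_dvd_of_pos_of_lt two_pos hn)
  have reflections_eq : {x : DihedralGroup n | ∃ i, x = sr i} = Set.range sr := by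
    simp only [Set.range, eq_comm]
  rw [reflections_eq]
  refine ⟨⟨sr 0, orbit_sr_zero two_ne_zero⟩, ncard_range_sr, by omega, fun f => ?_⟩
  refine exists_affine_two_le_ncard_agree_of_dominating_orbit (u := sr 0)
    (by rw [one_def]; nofun) ?_ f
  rw [orbit_sr_zero two_ne_zero, ncard_range_sr, nat_card]
end

section
/- Let p be an odd prime and let G = ℤ/p²ℤ ⋊ ℤ/pℤ = ⟨x, t | x^{p²} = t^p = 1, t x t⁻¹ = x^{1+p}⟩ be the nonabelian group of order p³ and exponent p². Then x is a universal element of G: for every g ∈ G there is an endomorphism φ of G with φ(x) = g. -/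
private lemma pow_eq_of_modEq' {G : Type*} [Group G] {y : G} {N : ℕ} (hy : y ^ N = 1)
    {a b : ℕ} (h : a ≡ b [MOD N]) : y ^ a = y ^ b :=
  pow_eq_pow_iff_modEq.mpr (h.of_dvd (orderOf_dvd_of_pow_eq_one hy))

/-- Let `p` be an odd prime and `G` the nonabelian group of order `p³` and exponent `p²`,
presented as `⟨x, t | x^(p²) = t^p = 1, t x t⁻¹ = x^(1+p)⟩`. Then `x` is a universal
element of `G`. -/
theorem stmt_12 {G : Type*} [Group G] [Fintype G] (p : ℕ) (hp : p.Prime) (hodd : Odd p)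
    (hcard : Fintype.card G = p ^ 3) (x t : G)
    (hx : x ^ (p ^ 2) = 1) (ht : t ^ p = 1) (hconj : t * x * t⁻¹ = x ^ (1 + p))
    (hgen : Subgroup.closure ({x, t} : Set G) = ⊤) :
    ∀ g : G, ∃ φ : G →* G, φ x = g := by
  haveI := Fact.mk hp
  haveI : NeZero (p ^ 2) := ⟨pow_ne_zero _ hp.ne_zero⟩
  haveI : Fact (1 < p ^ 2) := ⟨one_lt_pow₀ hp.one_lt (by norm_num)⟩
  -- conjugation of powers by powers of t
  have htgen : ∀ y : G, t * y * t⁻¹ = y ^ (1 + p) →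
      ∀ m n : ℕ, t ^ m * y ^ n = y ^ (n * (1 + p) ^ m) * t ^ m := by
    intro y hy m
    have hone : ∀ n : ℕ, t * y ^ n = y ^ (n * (1 + p)) * t := by
      intro n
      have h1 : t * y ^ n * t⁻¹ = y ^ (n * (1 + p)) := by
        rw [← conj_pow, hy, ← pow_mul, mul_comm (1 + p) n]
      rw [← h1]; group
    induction m with
    | zero => intro n; simp
    | succ m ih =>
      intro n
      rw [pow_succ' t, mul_assoc, ih n, ← mul_assoc, hone, mul_assoc, ← pow_succ' t]
      congr 2
      ring
  -- product of normal forms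
  have hFmul : ∀ y : G, t * y * t⁻¹ = y ^ (1 + p) → ∀ a b c d : ℕ,
      (y ^ a * t ^ b) * (y ^ c * t ^ d) = y ^ (a + c * (1 + p) ^ b) * t ^ (b + d) := by
    intro y hy a b c d
    rw [pow_add, pow_add, mul_assoc (y ^ a), ← mul_assoc (t ^ b), htgen y hy b c]
    group
  -- every element is x^a t^b
  have hS : ∀ h : G, ∃ a b : ℕ, h = x ^ a * t ^ b := by
    have hp1 : 1 ≤ p := hp.one_le
    have hp21 : 1 ≤ p ^ 2 := Nat.one_le_pow _ _ hp.pos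
    have tinv : ∀ b : ℕ, (t ^ b)⁻¹ = t ^ (b * (p - 1)) := by
      intro b
      apply inv_eq_of_mul_eq_one_right
      rw [← pow_add]
      have hb : b + b * (p - 1) = p * b := by
        have h1 : 1 + (p - 1) = p := by omega
        calc b + b * (p - 1) = b * (1 + (p - 1)) := by ring
          _ = p * b := by rw [h1]; ring
      rw [hb, pow_mul, ht, one_pow]
    have xinv : ∀ a : ℕ, (x ^ a)⁻¹ = x ^ (a * (p ^ 2 - 1)) := by
      intro a
      apply inv_eq_of_mul_eq_one_right
      rw [← pow_add]
      have hb : a + a * (p ^ 2 - 1) = p ^ 2 * a := by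
        have h1 : 1 + (p ^ 2 - 1) = p ^ 2 := by omega
        calc a + a * (p ^ 2 - 1) = a * (1 + (p ^ 2 - 1)) := by ring
          _ = p ^ 2 * a := by rw [h1]; ring
      rw [hb, pow_mul, hx, one_pow]
    set S : Subgroup G :=
      { carrier := {h : G | ∃ a b : ℕ, h = x ^ a * t ^ b}
        one_mem' := ⟨0, 0, by simp⟩
        mul_mem' := by
          rintro u v ⟨a, b, rfl⟩ ⟨c, d, rfl⟩
          exact ⟨a + c * (1 + p) ^ b, b + d, hFmul x hconj a b c d⟩
        inv_mem' := by
          rintro u ⟨a, b, rfl⟩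
          refine ⟨a * (p ^ 2 - 1) * (1 + p) ^ (b * (p - 1)), b * (p - 1), ?_⟩
          rw [mul_inv_rev, tinv, xinv, htgen x hconj] } with hSdef
    have hle : (⊤ : Subgroup G) ≤ S := by
      rw [← hgen]
      apply Subgroup.closure_le S |>.mpr
      rintro z hz
      rcases hz with rfl | rfl
      · exact ⟨1, 0, by simp⟩
      · exact ⟨0, 1, by simp⟩
    intro h
    exact hle (Subgroup.mem_top h)
  -- binomial fact
  have hbin : ∀ m : ℕ, (1 + p) ^ m ≡ 1 + m * p [MOD p ^ 2] := by
    intro m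
    induction m with
    | zero => simpa using Nat.ModEq.refl 1
    | succ m ih =>
      calc (1 + p) ^ (m + 1) = (1 + p) ^ m * (1 + p) := pow_succ _ _
        _ ≡ (1 + m * p) * (1 + p) [MOD p ^ 2] := ih.mul_right _
        _ = (1 + (m + 1) * p) + m * p ^ 2 := by ring
        _ ≡ 1 + (m + 1) * p [MOD p ^ 2] := by
            show _ % _ = _ % _
            rw [Nat.add_mul_mod_self_right]
  -- p-th power of a normal form
  have hppow : ∀ i j : ℕ, (x ^ i * t ^ j) ^ p = x ^ (i * p) := by
    intro i j
    have hpow : ∀ n : ℕ, (x ^ i * t ^ j) ^ n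
        = x ^ (i * ∑ k ∈ Finset.range n, (1 + p) ^ (j * k)) * t ^ (j * n) := by
      intro n
      induction n with
      | zero => simp
      | succ n ih =>
        rw [pow_succ, ih, hFmul x hconj, Finset.sum_range_succ, mul_add, Nat.mul_succ]
    -- the sum is ≡ n + p * j * (triangular) mod p^2
    have hsum : ∀ n : ℕ, (∑ k ∈ Finset.range n, (1 + p) ^ (j * k))
        ≡ n + p * j * (∑ k ∈ Finset.range n, k) [MOD p ^ 2] := by
      intro n
      induction n with
      | zero => simpa using Nat.ModEq.refl 0
      | succ n ih =>
        rw [Finset.sum_range_succ, Finset.sum_range_succ]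
        calc (∑ k ∈ Finset.range n, (1 + p) ^ (j * k)) + (1 + p) ^ (j * n)
            ≡ (n + p * j * (∑ k ∈ Finset.range n, k)) + (1 + (j * n) * p) [MOD p ^ 2] :=
              ih.add (hbin (j * n))
          _ = (n + 1) + p * j * ((∑ k ∈ Finset.range n, k) + n) := by ring
    have hdvd : p ∣ ∑ k ∈ Finset.range p, k := by
      have h2 : (∑ k ∈ Finset.range p, k) * 2 = p * (p - 1) := Finset.sum_range_id_mul_two p
      have hpd : p ∣ (∑ k ∈ Finset.range p, k) * 2 := ⟨p - 1, h2.symm ▸ rfl⟩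
      rcases (Nat.Prime.dvd_mul hp).mp hpd with h | h
      · exact h
      · exact absurd hodd (by rw [(Nat.prime_dvd_prime_iff_eq hp Nat.prime_two).mp h]; decide)
    have hsp : (∑ k ∈ Finset.range p, (1 + p) ^ (j * k)) ≡ p [MOD p ^ 2] := by
      refine (hsum p).trans ?_
      obtain ⟨m, hm⟩ := hdvd
      have : p + p * j * (∑ k ∈ Finset.range p, k) = p + (j * m) * p ^ 2 := by
        rw [hm]; ring
      rw [this]
      show _ % _ = _ % _
      rw [Nat.add_mul_mod_self_right]
    rw [hpow p, mul_comm j p, pow_mul t, ht, one_pow, mul_one]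
    exact pow_eq_of_modEq' hx (hsp.mul_left i)
  intro g
  obtain ⟨i, j, rfl⟩ := hS g
  -- the two relations satisfied by g = x^i t^j
  have hgconj : t * (x ^ i * t ^ j) * t⁻¹ = (x ^ i * t ^ j) ^ (1 + p) := by
    have h2 : t * x ^ i = x ^ (i * (1 + p)) * t := by
      have := htgen x hconj 1 i
      simpa using this
    have h3 : (x ^ i * t ^ j) ^ (1 + p) = x ^ (i * (1 + p)) * t ^ j := by
      rw [add_comm 1 p, pow_succ, hppow i j, ← mul_assoc, ← pow_add,
        show i * p + i = i * (p + 1) by ring]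
    rw [h3]
    calc t * (x ^ i * t ^ j) * t⁻¹ = (t * x ^ i) * t ^ j * t⁻¹ * t * t⁻¹ := by group
      _ = (x ^ (i * (1 + p)) * t) * t ^ j * t⁻¹ * t * t⁻¹ := by rw [h2]
      _ = x ^ (i * (1 + p)) * t ^ j := by group
  have hgord : (x ^ i * t ^ j) ^ (p ^ 2) = 1 := by
    rw [show p ^ 2 = p * p by ring, pow_mul, hppow i j, ← pow_mul,
      show i * p * p = p ^ 2 * i by ring, pow_mul, hx, one_pow]
  -- val arithmetic
  have hval2 : ∀ (a c : ZMod (p ^ 2)) (m : ℕ),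
      (a + c * (m : ZMod (p ^ 2))).val ≡ a.val + c.val * m [MOD p ^ 2] := by
    intro a c m
    rw [← ZMod.natCast_eq_natCast_iff]
    push_cast
    simp [ZMod.natCast_val, ZMod.cast_id]
  have hval1 : ∀ (b d : ZMod p), (b + d).val ≡ b.val + d.val [MOD p] := by
    intro b d
    rw [← ZMod.natCast_eq_natCast_iff]
    push_cast
    simp [ZMod.natCast_val, ZMod.cast_id]
  -- normal-form multiplication in ZMod exponents
  have hFm : ∀ y : G, y ^ (p ^ 2) = 1 → t * y * t⁻¹ = y ^ (1 + p) →
      ∀ (a c : ZMod (p ^ 2)) (b d : ZMod p),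
      (y ^ a.val * t ^ b.val) * (y ^ c.val * t ^ d.val)
        = y ^ (a + c * (((1 + p) ^ b.val : ℕ) : ZMod (p ^ 2))).val * t ^ (b + d).val := by
    intro y hy1 hy2 a c b d
    rw [hFmul y hy2, pow_eq_of_modEq' hy1 (hval2 a c ((1 + p) ^ b.val)),
      pow_eq_of_modEq' ht (hval1 b d)]
  -- the bijection
  have hEsurj : Function.Surjective
      (fun ab : ZMod (p ^ 2) × ZMod p => x ^ ab.1.val * t ^ ab.2.val) := by
    intro h
    obtain ⟨a, b, rfl⟩ := hS h
    refine ⟨((a : ZMod (p ^ 2)), (b : ZMod p)), ?_⟩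
    show x ^ ZMod.val ((a : ZMod (p ^ 2))) * t ^ ZMod.val ((b : ZMod p)) = _
    rw [ZMod.val_natCast, ZMod.val_natCast,
      pow_eq_of_modEq' hx (Nat.mod_modEq a (p ^ 2)), pow_eq_of_modEq' ht (Nat.mod_modEq b p)]
  have hcards : Fintype.card (ZMod (p ^ 2) × ZMod p) = Fintype.card G := by
    rw [Fintype.card_prod, ZMod.card, ZMod.card, hcard]
    ring
  have hEbij : Function.Bijective
      (fun ab : ZMod (p ^ 2) × ZMod p => x ^ ab.1.val * t ^ ab.2.val) :=
    (Fintype.bijective_iff_surjective_and_card _).mpr ⟨hEsurj, hcards⟩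
  set e : (ZMod (p ^ 2) × ZMod p) ≃ G := Equiv.ofBijective _ hEbij with he
  have hea : ∀ z : ZMod (p ^ 2) × ZMod p, e z = x ^ z.1.val * t ^ z.2.val := fun z => rfl
  refine ⟨MonoidHom.mk'
    (fun h => (x ^ i * t ^ j) ^ (e.symm h).1.val * t ^ (e.symm h).2.val) ?_, ?_⟩
  · intro h₁ h₂
    obtain ⟨a, ha⟩ : ∃ a, e a = h₁ := ⟨e.symm h₁, e.apply_symm_apply h₁⟩
    obtain ⟨b, hb⟩ : ∃ b, e b = h₂ := ⟨e.symm h₂, e.apply_symm_apply h₂⟩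
    have hmul : e a * e b =
        e (a.1 + b.1 * (((1 + p) ^ a.2.val : ℕ) : ZMod (p ^ 2)), a.2 + b.2) := by
      rw [hea, hea, hea]
      exact hFm x hx hconj a.1 b.1 a.2 b.2
    rw [← ha, ← hb, hmul]
    simp only [Equiv.symm_apply_apply]
    exact (hFm (x ^ i * t ^ j) hgord hgconj a.1 b.1 a.2 b.2).symm
  · have h1 : e ((1 : ZMod (p ^ 2)), (0 : ZMod p)) = x := by
      rw [hea]
      show x ^ (1 : ZMod (p ^ 2)).val * t ^ (0 : ZMod p).val = x
      rw [ZMod.val_one, ZMod.val_zero]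
      simp
    have h2 : e.symm x = ((1 : ZMod (p ^ 2)), (0 : ZMod p)) := by
      rw [Equiv.symm_apply_eq]
      exact h1.symm
    show (x ^ i * t ^ j) ^ (e.symm x).1.val * t ^ (e.symm x).2.val = x ^ i * t ^ j
    rw [h2]
    show (x ^ i * t ^ j) ^ (1 : ZMod (p ^ 2)).val * t ^ (0 : ZMod p).val = x ^ i * t ^ j
    rw [ZMod.val_one, ZMod.val_zero]
    simp
end

section
/- For every positive integer n ≥ 2, there exists a function f : ℤ/nℤ → ℤ/nℤ that agrees with any given endomorphism of ℤ/nℤ on at most one element; combined with the existence of a universal element in ℤ/nℤ, the minimum endomorphic approximability of ℤ/nℤ is exactly 1. -/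
/-!
Send every unit `x` (a generator of `ℤ/nℤ`) to `x * x` and every non-unit to `1`. If this agrees
with `x ↦ a * x` at a unit `x`, cancelling `x` gives `x = a`; it cannot agree at a non-unit `x`,
since `1 = a * x` would make `x` a unit. So each endomorphism agrees with it at most once.
Conversely every function `g` agrees with the endomorphism `x ↦ g 1 * x` at `1`, so no
approximability is `0`.
-/

/-- The endomorphic approximability of a function `f` on `ℤ/nℤ`: the maximum over
endomorphisms `x ↦ a * x` of the number of points of agreement. -/
noncomputable def enappZMod (n : ℕ) (f : ZMod n → ZMod n) : ℕ :=
  sSup {k | ∃ a : ZMod n, k = Set.ncard {x | f x = a * x}}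

section SquareOnUnits

variable {M : Type*} [CommMonoid M]

open Classical in
noncomputable def squareOnUnits (x : M) : M :=
  if IsUnit x then x * x else 1

theorem setOf_squareOnUnits_eq_mul_subset (a : M) :
    {x | squareOnUnits x = a * x} ⊆ {a} := by
  intro x hx
  rw [Set.mem_ofPred_eq, squareOnUnits] at hx
  split_ifs at hx with hu
  · exact hu.mul_right_cancel hx
  · exact absurd (.of_mul_eq_one_right a hx.symm) hu

theorem ncard_setOf_squareOnUnits_eq_mul_le_one (a : M) :
    {x | squareOnUnits x = a * x}.ncard ≤ 1 :=
  (Set.ncard_le_ncard (setOf_squareOnUnits_eq_mul_subset a)).trans (Set.ncard_singleton a).le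

end SquareOnUnits

section EnappZMod

variable {n : ℕ}

theorem enappZMod_le_of_forall_ncard_le {f : ZMod n → ZMod n} {k : ℕ}
    (h : ∀ a : ZMod n, {x | f x = a * x}.ncard ≤ k) : enappZMod n f ≤ k :=
  csSup_le ⟨_, 0, rfl⟩ (by rintro _ ⟨a, rfl⟩; exact h a)

theorem ncard_le_enappZMod [NeZero n] (f : ZMod n → ZMod n) (a : ZMod n) :
    {x | f x = a * x}.ncard ≤ enappZMod n f := by
  refine le_csSup ⟨Nat.card (ZMod n), ?_⟩ ⟨a, rfl⟩
  rintro _ ⟨b, rfl⟩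
  exact Set.ncard_le_card _

theorem one_le_enappZMod [NeZero n] (f : ZMod n → ZMod n) : 1 ≤ enappZMod n f := by
  have hone : (1 : ZMod n) ∈ {x | f x = f 1 * x} := by simp
  exact ((Set.ncard_pos).2 ⟨1, hone⟩).trans_le (ncard_le_enappZMod f (f 1))

end EnappZMod

/-- For `n ≥ 2`, some function on `ℤ/nℤ` agrees with each endomorphism on at most one
element, and the minimum endomorphic approximability of `ℤ/nℤ` is exactly 1. -/
theorem stmt_13 (n : ℕ) (hn : 2 ≤ n) :
    (∃ f : ZMod n → ZMod n, ∀ a : ZMod n, Set.ncard {x | f x = a * x} ≤ 1) ∧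
    sInf (Set.range (enappZMod n)) = 1 := by
  have : NeZero n := ⟨by omega⟩
  refine ⟨⟨squareOnUnits, ncard_setOf_squareOnUnits_eq_mul_le_one⟩, le_antisymm ?_ ?_⟩
  · exact (Nat.sInf_le (Set.mem_range_self squareOnUnits)).trans
      (enappZMod_le_of_forall_ncard_le ncard_setOf_squareOnUnits_eq_mul_le_one)
  · exact le_csInf (Set.range_nonempty _) (by rintro _ ⟨f, rfl⟩; exact one_le_enappZMod f)
end

section
/- Let p be a prime and k a positive integer. Write every x ∈ {0,1,…,p^k − 1} uniquely as x = rem(x) + quot(x)·p with 0 ≤ rem(x) < p, and define f : ℤ/p^kℤ → ℤ/p^kℤ by f(x) = rem(x) + quot(x). Then f does not agree with any affine map of ℤ/p^kℤ on any subset of size p + 1. Hence the minimum affine approximability of ℤ/p^kℤ is at most p. -/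
/-- The affine approximability of a function `f` on `ℤ/nℤ`: the maximum over affine maps
`x ↦ a * x + b` of the number of points of agreement. -/
noncomputable def affappZMod (n : ℕ) (f : ZMod n → ZMod n) : ℕ :=
  sSup {k | ∃ a b : ZMod n, k = Set.ncard {x | f x = a * x + b}}

/-- The function `x ↦ rem(x) + quot(x)` on `ℤ/p^kℤ`, where
`x = rem(x) + quot(x)·p` with `0 ≤ rem(x) < p`. -/
def remQuotFun (p k : ℕ) : ZMod (p ^ k) → ZMod (p ^ k) :=
  fun x => ((x.val % p : ℕ) : ZMod (p ^ k)) + ((x.val / p : ℕ) : ZMod (p ^ k))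

/-!
Two points `x ≠ y` of an agreement set with `rem x = rem y` would give
`quot x - quot y = a (x - y) = a p (quot x - quot y)`; since `p` is nilpotent in `ℤ/p^kℤ`,
`1 - a p` is a unit, so `quot x = quot y` and `x = y`. Thus `rem` is injective on every
agreement set, which therefore has at most `p` elements.
-/

lemma eq_zero_of_eq_mul_mul_of_isNilpotent {R : Type*} [CommRing R] {c : R}
    (hc : IsNilpotent c) (a d : R) (h : d = a * c * d) : d = 0 := by
  have hunit : IsUnit (1 - a * c) :=
    (Commute.isNilpotent_mul_left (Commute.all a c) hc).isUnit_one_sub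
  exact hunit.mul_right_eq_zero.mp (by linear_combination h)

lemma ZMod.isNilpotent_natCast_self_pow (p k : ℕ) : IsNilpotent (p : ZMod (p ^ k)) :=
  ⟨k, by rw [← Nat.cast_pow, ZMod.natCast_self]⟩

lemma ZMod.natCast_mod_add_mul_div {n : ℕ} [NeZero n] (p : ℕ) (x : ZMod n) :
    ((x.val % p : ℕ) : ZMod n) + p * ((x.val / p : ℕ) : ZMod n) = x := by
  rw [← Nat.cast_mul, ← Nat.cast_add, Nat.mod_add_div, ZMod.natCast_zmod_val]

lemma ZMod.eq_of_mod_eq_of_natCast_div_eq {n : ℕ} [NeZero n] {p : ℕ} {x y : ZMod n}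
    (hrem : x.val % p = y.val % p)
    (hquot : ((x.val / p : ℕ) : ZMod n) = ((y.val / p : ℕ) : ZMod n)) : x = y := by
  rw [← ZMod.natCast_mod_add_mul_div p x, ← ZMod.natCast_mod_add_mul_div p y, hrem, hquot]

lemma injOn_val_mod_of_remQuotFun_eq_affine {p k : ℕ} [NeZero p] {a b : ZMod (p ^ k)}
    {X : Set (ZMod (p ^ k))} (hX : ∀ x ∈ X, remQuotFun p k x = a * x + b) :
    Set.InjOn (fun x : ZMod (p ^ k) => x.val % p) X := by
  intro x hx y hy (hrem : x.val % p = y.val % p)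
  set d : ZMod (p ^ k) := ((x.val / p : ℕ) : ZMod (p ^ k)) - ((y.val / p : ℕ) : ZMod (p ^ k))
  have hsub : x - y = p * d := by
    linear_combination (-ZMod.natCast_mod_add_mul_div p x + ZMod.natCast_mod_add_mul_div p y
      + congrArg (Nat.cast : ℕ → ZMod (p ^ k)) hrem)
  have hd : d = a * p * d := by
    have hfx := hX x hx
    have hfy := hX y hy
    simp only [remQuotFun, hrem] at hfx hfy
    linear_combination hfx - hfy + a * hsub
  exact ZMod.eq_of_mod_eq_of_natCast_div_eq hrem <| sub_eq_zero.mp <|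
    eq_zero_of_eq_mul_mul_of_isNilpotent (ZMod.isNilpotent_natCast_self_pow p k) a d hd

lemma ncard_le_of_remQuotFun_eq_affine {p k : ℕ} [NeZero p] {a b : ZMod (p ^ k)}
    {X : Set (ZMod (p ^ k))} (hX : ∀ x ∈ X, remQuotFun p k x = a * x + b) : X.ncard ≤ p := by
  calc X.ncard ≤ (Set.Iio p).ncard :=
        Set.ncard_le_ncard_of_injOn _ (fun x _ => Nat.mod_lt _ (NeZero.pos p))
          (injOn_val_mod_of_remQuotFun_eq_affine hX)
    _ = p := by simp [Set.ncard_eq_toFinset_card']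

lemma affappZMod_le {n m : ℕ} {f : ZMod n → ZMod n}
    (hf : ∀ a b : ZMod n, {x | f x = a * x + b}.ncard ≤ m) : affappZMod n f ≤ m :=
  csSup_le ⟨_, 0, 0, rfl⟩ (by rintro _ ⟨a, b, rfl⟩; exact hf a b)

theorem stmt_15_general (p k : ℕ) (hp : p.Prime) :
    (∀ (a b : ZMod (p ^ k)) (X : Set (ZMod (p ^ k))),
      (∀ x ∈ X, remQuotFun p k x = a * x + b) → X.ncard ≤ p) ∧
    sInf (Set.range (affappZMod (p ^ k))) ≤ p := by
  have : NeZero p := ⟨hp.ne_zero⟩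
  have hbound : ∀ (a b : ZMod (p ^ k)) (X : Set (ZMod (p ^ k))),
      (∀ x ∈ X, remQuotFun p k x = a * x + b) → X.ncard ≤ p :=
    fun _ _ _ hX => ncard_le_of_remQuotFun_eq_affine hX
  refine ⟨hbound, ?_⟩
  calc sInf (Set.range (affappZMod (p ^ k))) ≤ affappZMod (p ^ k) (remQuotFun p k) :=
        Nat.sInf_le ⟨_, rfl⟩
    _ ≤ p := affappZMod_le fun a b => hbound a b _ fun _ hx => hx

/-- For `p` prime and `k ≥ 1`, the function `x ↦ rem(x) + quot(x)` on `ℤ/p^kℤ` does not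
agree with any affine map on any subset of size `p + 1`; hence the minimum affine
approximability of `ℤ/p^kℤ` is at most `p`. -/
theorem stmt_15 (p k : ℕ) (hp : p.Prime) (hk : 1 ≤ k) :
    (∀ (a b : ZMod (p ^ k)) (X : Set (ZMod (p ^ k))),
      (∀ x ∈ X, remQuotFun p k x = a * x + b) → X.ncard ≤ p) ∧
    sInf (Set.range (affappZMod (p ^ k))) ≤ p :=
  stmt_15_general p k hp
end

section
/- Let G = (ℤ/2ℤ)² and define f : G → G by f(0,0) = (1,0), f(1,0) = (1,0), f(0,1) = (0,1), f(1,1) = (0,1). Then f agrees with any endomorphism of G on at most 2 elements, and every function on G agrees with some endomorphism on at least 2 elements; hence the minimum endomorphic approximability of (ℤ/2ℤ)² equals 2. -/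
/-- The endomorphic approximability of a function `f` on `(ℤ/2ℤ)²`: the maximum over
additive endomorphisms `φ` of the number of points of agreement. -/
noncomputable def enappKlein (f : ZMod 2 × ZMod 2 → ZMod 2 × ZMod 2) : ℕ :=
  sSup {k | ∃ φ : ZMod 2 × ZMod 2 →+ ZMod 2 × ZMod 2, k = Set.ncard {x | f x = φ x}}

def myHom (v1 v2 : ZMod 2 × ZMod 2) : ZMod 2 × ZMod 2 →+ ZMod 2 × ZMod 2 where
  toFun x := x.1 • v1 + x.2 • v2
  map_zero' := by simp
  map_add' := by
    rintro ⟨a,b⟩ ⟨c,d⟩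
    simp only [Prod.fst_add, Prod.snd_add, add_smul]
    abel

lemma myHom_apply (v1 v2 x) : myHom v1 v2 x = x.1 • v1 + x.2 • v2 := rfl

lemma zmod2_cases : ∀ z : ZMod 2, z = 0 ∨ z = 1 := by decide

lemma pair_card_le (a b : ZMod 2 × ZMod 2) : Set.ncard {a, b} ≤ 2 :=
  le_trans (Set.ncard_insert_le _ _) (by simp)

lemma part1 (φ : ZMod 2 × ZMod 2 →+ ZMod 2 × ZMod 2) :
    Set.ncard {x : ZMod 2 × ZMod 2 |
      (if x.2 = 0 then ((1 : ZMod 2), (0 : ZMod 2)) else (0, 1)) = φ x} ≤ 2 := by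
  have h0 : φ ((0 : ZMod 2), (0 : ZMod 2)) = 0 := map_zero φ
  by_cases h1 : ((1:ZMod 2),(0:ZMod 2)) = φ (1,0)
  · by_cases h2 : ((0:ZMod 2),(1:ZMod 2)) = φ (0,1)
    · have h3 : φ (1,1) = (1,1) := by
        have e : ((1:ZMod 2),(1:ZMod 2)) = (1,0) + (0,1) := by decide
        rw [e, map_add, ← h1, ← h2]
      refine le_trans (Set.ncard_le_ncard ?_ (Set.toFinite _)) (pair_card_le (1,0) (0,1))
      rintro ⟨a,b⟩ hx
      simp only [Set.mem_setOf_eq] at hx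
      rcases zmod2_cases a with rfl|rfl <;> rcases zmod2_cases b with rfl|rfl
      · rw [if_pos rfl, h0] at hx; exact absurd hx (by decide)
      · right; rfl
      · left; rfl
      · rw [if_neg (by decide), h3] at hx; exact absurd hx (by decide)
    · refine le_trans (Set.ncard_le_ncard ?_ (Set.toFinite _)) (pair_card_le (1,0) (1,1))
      rintro ⟨a,b⟩ hx
      simp only [Set.mem_setOf_eq] at hx
      rcases zmod2_cases a with rfl|rfl <;> rcases zmod2_cases b with rfl|rfl
      · rw [if_pos rfl, h0] at hx; exact absurd hx (by decide)
      · rw [if_neg (by decide)] at hx; exact absurd hx h2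
      · left; rfl
      · right; rfl
  · refine le_trans (Set.ncard_le_ncard ?_ (Set.toFinite _)) (pair_card_le (0,1) (1,1))
    rintro ⟨a,b⟩ hx
    simp only [Set.mem_setOf_eq] at hx
    rcases zmod2_cases a with rfl|rfl <;> rcases zmod2_cases b with rfl|rfl
    · rw [if_pos rfl, h0] at hx; exact absurd hx (by decide)
    · left; rfl
    · rw [if_pos rfl] at hx; exact absurd hx h1
    · right; rfl

lemma part2 (g : ZMod 2 × ZMod 2 → ZMod 2 × ZMod 2) :
    ∃ φ : ZMod 2 × ZMod 2 →+ ZMod 2 × ZMod 2, 2 ≤ Set.ncard {x | g x = φ x} := by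
  refine ⟨myHom (g (1,0)) (g (0,1)), ?_⟩
  have hsub : ({(1,0), (0,1)} : Set (ZMod 2 × ZMod 2)) ⊆
      {x | g x = myHom (g (1,0)) (g (0,1)) x} := by
    rintro x (rfl | rfl) <;> simp [myHom_apply]
  calc 2 = Set.ncard ({(1,0), (0,1)} : Set (ZMod 2 × ZMod 2)) :=
        (Set.ncard_pair (by decide)).symm
    _ ≤ _ := Set.ncard_le_ncard hsub (Set.toFinite _)

/-- The function on `(ℤ/2ℤ)²` with `f(0,0) = f(1,0) = (1,0)` and `f(0,1) = f(1,1) = (0,1)`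
agrees with each endomorphism on at most 2 elements; every function agrees with some
endomorphism on at least 2 elements; hence the minimum endomorphic approximability of
`(ℤ/2ℤ)²` equals 2. -/
theorem stmt_16 :
    (∀ φ : ZMod 2 × ZMod 2 →+ ZMod 2 × ZMod 2,
      Set.ncard {x : ZMod 2 × ZMod 2 |
        (if x.2 = 0 then ((1 : ZMod 2), (0 : ZMod 2)) else (0, 1)) = φ x} ≤ 2) ∧
    (∀ g : ZMod 2 × ZMod 2 → ZMod 2 × ZMod 2,
      ∃ φ : ZMod 2 × ZMod 2 →+ ZMod 2 × ZMod 2, 2 ≤ Set.ncard {x | g x = φ x}) ∧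
    sInf (Set.range enappKlein) = 2 := by
  refine ⟨part1, part2, ?_⟩
  have hbdd : ∀ g : ZMod 2 × ZMod 2 → ZMod 2 × ZMod 2,
      BddAbove {k | ∃ φ : ZMod 2 × ZMod 2 →+ ZMod 2 × ZMod 2,
        k = Set.ncard {x | g x = φ x}} := by
    intro g
    refine ⟨Set.ncard (Set.univ : Set (ZMod 2 × ZMod 2)), ?_⟩
    rintro k ⟨φ, rfl⟩
    exact Set.ncard_le_ncard (Set.subset_univ _) (Set.toFinite _)
  have hlow : ∀ g, 2 ≤ enappKlein g := by
    intro g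
    obtain ⟨φ, hφ⟩ := part2 g
    exact le_trans hφ (le_csSup (hbdd g) ⟨φ, rfl⟩)
  have hup : enappKlein (fun x => if x.2 = 0 then ((1 : ZMod 2), (0 : ZMod 2)) else (0, 1)) ≤ 2 := by
    refine csSup_le ⟨_, 0, rfl⟩ ?_
    rintro k ⟨φ, rfl⟩
    exact part1 φ
  refine le_antisymm (le_trans (Nat.sInf_le ⟨_, rfl⟩) hup) ?_
  refine le_csInf ⟨_, Set.mem_range_self (fun _ => 0)⟩ ?_
  rintro k ⟨g, rfl⟩
  exact hlow g
end

section
/- The minimum affine approximability of the symmetric group Sym₃ equals 2; moreover Sym₃ has no universal element, so its minimum endomorphic approximability equals 0. Explicitly, writing Sym₃ = D₆ = ⟨r, s | r³ = s² = 1, srs⁻¹ = r⁻¹⟩, the function f with f(1)=1, f(r)=r, f(r²)=r, f(s)=1, f(sr)=r², f(sr²)=r² agrees with no affine map of D₆ on any 3-element subset. -/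
set_option maxRecDepth 10000

/-- The affine approximability of a function `f` on a finite group `G`. -/
noncomputable def affapp {G : Type*} [Group G] [Fintype G] (f : G → G) : ℕ :=
  sSup {n | ∃ (a : G) (φ : G →* G), n = Set.ncard {x | f x = a * φ x}}

/-- The endomorphic approximability of a function `f` on a finite group `G`. -/
noncomputable def enapp {G : Type*} [Group G] [Fintype G] (f : G → G) : ℕ :=
  sSup {n | ∃ φ : G →* G, n = Set.ncard {x | f x = φ x}}

abbrev G3 := Equiv.Perm (Fin 3)

def r0 : G3 := finRotate 3
def s0 : G3 := Equiv.swap 0 1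

def expand (x A B : G3) : G3 :=
  if x = 1 then 1 else if x = r0 then B else if x = r0 ^ 2 then B * B
  else if x = s0 then A else if x = s0 * r0 then A * B else A * B * B

def f0 : G3 → G3 := fun x =>
  if x = 1 then 1 else if x = r0 then r0 else if x = r0 ^ 2 then r0
  else if x = s0 then 1 else if x = s0 * r0 then r0 ^ 2 else r0 ^ 2

set_option maxRecDepth 100000 in
set_option synthInstance.maxHeartbeats 1000000 in
set_option synthInstance.maxSize 5000 in
lemma big : ∀ A B : G3, A * A = 1 → B * B * B = 1 → (A * B) * (A * B) = 1 →
    ∀ x y z : G3, x ≠ y → x ≠ z → y ≠ z →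
    ¬((f0 x)⁻¹ * f0 y = (expand x A B)⁻¹ * expand y A B ∧
      (f0 x)⁻¹ * f0 z = (expand x A B)⁻¹ * expand z A B) := by decide

/-- Every endomorphism of `Sym₃` is given by `expand` on suitable generator images. -/
lemma key (φ : G3 →* G3) :
    ∃ A B : G3, A * A = 1 ∧ B * B * B = 1 ∧ (A * B) * (A * B) = 1 ∧
      ∀ x, φ x = expand x A B := by
  refine ⟨φ s0, φ r0, ?_, ?_, ?_, ?_⟩
  · simp only [← map_mul]
    rw [show s0 * s0 = 1 by decide, map_one]
  · simp only [← map_mul]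
    rw [show r0 * r0 * r0 = 1 by decide, map_one]
  · simp only [← map_mul]
    rw [show s0 * r0 * (s0 * r0) = 1 by decide, map_one]
  · intro x
    have h6 : ∀ y : G3, y = 1 ∨ y = r0 ∨ y = r0 ^ 2 ∨ y = s0 ∨ y = s0 * r0 ∨
        y = s0 * r0 * r0 := by decide
    rcases h6 x with rfl | rfl | rfl | rfl | rfl | rfl
    · rw [map_one]
      rw [expand]
      rw [if_pos rfl]
    · rw [expand]
      rw [if_neg (by decide), if_pos rfl]
    · rw [expand, if_neg (by decide), if_neg (by decide), if_pos rfl, pow_two, map_mul]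
    · rw [expand]
      rw [if_neg (by decide), if_neg (by decide), if_neg (by decide), if_pos rfl]
    · rw [expand, if_neg (by decide), if_neg (by decide), if_neg (by decide),
        if_pos rfl, map_mul, if_neg (by decide)]
    · rw [expand, if_neg (by decide), if_neg (by decide), if_neg (by decide),
        if_neg (by decide), if_neg (by decide), map_mul, map_mul]

/-- No affine map agrees with `f0` on three distinct points. -/
lemma part4 (X : Set G3) (hX : X.ncard = 3) (a : G3) (φ : G3 →* G3) :
    ¬∀ x ∈ X, f0 x = a * φ x := by
  intro h
  obtain ⟨x, y, z, hxy, hxz, hyz, rfl⟩ := Set.ncard_eq_three.mp hX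
  obtain ⟨A, B, hA, hB, hAB, hφ⟩ := key φ
  have hx := h x (by simp)
  have hy := h y (by simp)
  have hz := h z (by simp)
  rw [hφ] at hx hy hz
  refine big A B hA hB hAB x y z hxy hxz hyz ⟨?_, ?_⟩
  · rw [hx, hy]; group
  · rw [hx, hz]; group

lemma bdd (f : G3 → G3) :
    BddAbove {n | ∃ (a : G3) (φ : G3 →* G3), n = Set.ncard {x | f x = a * φ x}} := by
  refine ⟨Nat.card G3, ?_⟩
  rintro n ⟨a, φ, rfl⟩
  calc Set.ncard {x | f x = a * φ x} ≤ Set.ncard (Set.univ : Set G3) :=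
        Set.ncard_le_ncard (Set.subset_univ _) Set.finite_univ
    _ = Nat.card G3 := Set.ncard_univ _

lemma two_le_affapp (f : G3 → G3) : 2 ≤ affapp f := by
  have pig : ∀ u v w : G3, (u⁻¹ * v) ^ 3 = 1 ∨ (u⁻¹ * w) ^ 3 = 1 ∨
      (v⁻¹ * w) ^ 3 = 1 := by decide
  obtain ⟨x, y, hxy, hc1, hc3, hf3⟩ :
      ∃ x y : G3, x ≠ y ∧ x⁻¹ * y ≠ 1 ∧ (x⁻¹ * y) ^ 3 = 1 ∧
        ((f x)⁻¹ * f y) ^ 3 = 1 := by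
    rcases pig (f (Equiv.swap 0 1)) (f (Equiv.swap 0 2)) (f (Equiv.swap 1 2)) with h | h | h
    · exact ⟨_, _, by decide, by decide, by decide, h⟩
    · exact ⟨_, _, by decide, by decide, by decide, h⟩
    · exact ⟨_, _, by decide, by decide, by decide, h⟩
  have conj : ∀ c p : G3, c ≠ 1 → c ^ 3 = 1 → p ^ 3 = 1 →
      p = 1 ∨ ∃ g : G3, g * c * g⁻¹ = p := by decide
  obtain ⟨a, φ, hax, hay⟩ : ∃ (a : G3) (φ : G3 →* G3), f x = a * φ x ∧ f y = a * φ y := by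
    rcases conj (x⁻¹ * y) ((f x)⁻¹ * f y) hc1 hc3 hf3 with h1 | ⟨g, hg⟩
    · have hfy : f x = f y := inv_mul_eq_one.mp h1
      exact ⟨f x, 1, by simp, by simp [hfy]⟩
    · refine ⟨f x * (g * x * g⁻¹)⁻¹, (MulAut.conj g).toMonoidHom, ?_, ?_⟩
      · have hc : (MulAut.conj g).toMonoidHom x = g * x * g⁻¹ := rfl
        rw [hc]; group
      · have hc : (MulAut.conj g).toMonoidHom y = g * y * g⁻¹ := rfl
        symm
        have h2 : (g * x * g⁻¹)⁻¹ * (g * y * g⁻¹) = g * (x⁻¹ * y) * g⁻¹ := by group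
        calc f x * (g * x * g⁻¹)⁻¹ * (MulAut.conj g).toMonoidHom y
            = f x * ((g * x * g⁻¹)⁻¹ * (g * y * g⁻¹)) := by rw [hc, mul_assoc]
          _ = f x * ((f x)⁻¹ * f y) := by rw [h2, hg]
          _ = f y := by group
  have hsub : {x, y} ⊆ {z | f z = a * φ z} := by
    rintro w (rfl | rfl)
    · exact hax
    · exact hay
  have h2 : 2 ≤ Set.ncard {z | f z = a * φ z} := by
    rw [← Set.ncard_pair hxy]
    exact Set.ncard_le_ncard hsub (Set.toFinite _)
  exact le_trans h2 (le_csSup (bdd f) ⟨a, φ, rfl⟩)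

lemma affapp_f0 : affapp f0 = 2 := by
  refine le_antisymm ?_ (two_le_affapp f0)
  unfold affapp
  refine csSup_le ⟨_, ⟨1, 1, rfl⟩⟩ ?_
  rintro n ⟨a, φ, rfl⟩
  by_contra hn
  push_neg at hn
  obtain ⟨Y, hYsub, hY3⟩ := Set.exists_subset_card_eq (show 3 ≤ Set.ncard {x | f0 x = a * φ x} from hn)
  exact part4 Y hY3 a φ fun x hx => hYsub hx

lemma no_universal : ¬∃ u : G3, ∀ g : G3, ∃ φ : G3 →* G3, φ u = g := by
  rintro ⟨u, hu⟩
  obtain ⟨φ, hφ⟩ := hu r0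
  obtain ⟨ψ, hψ⟩ := hu s0
  have h3 : orderOf r0 = 3 := orderOf_eq_prime (by decide) (by decide)
  have h2 : orderOf s0 = 2 := orderOf_eq_prime (by decide) (by decide)
  have d3 : (3 : ℕ) ∣ orderOf u := by
    have := orderOf_map_dvd φ u
    rwa [hφ, h3] at this
  have d2 : (2 : ℕ) ∣ orderOf u := by
    have := orderOf_map_dvd ψ u
    rwa [hψ, h2] at this
  have e23 : ∀ v : G3, v ^ 2 = 1 ∨ v ^ 3 = 1 := by decide
  rcases e23 u with h | h
  · have hd : orderOf u ∣ 2 := orderOf_dvd_of_pow_eq_one h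
    exact absurd (d3.trans hd) (by norm_num)
  · have hd : orderOf u ∣ 3 := orderOf_dvd_of_pow_eq_one h
    exact absurd (d2.trans hd) (by norm_num)

def f1 : G3 → G3 := fun u => if u * u = 1 then r0 else s0

lemma enapp_f1 : enapp f1 = 0 := by
  have hset : {n | ∃ φ : G3 →* G3, n = Set.ncard {x | f1 x = φ x}} = {0} := by
    ext n
    simp only [Set.mem_setOf_eq, Set.mem_singleton_iff]
    constructor
    · rintro ⟨φ, rfl⟩
      have hempty : {x | f1 x = φ x} = ∅ := by
        ext x
        simp only [Set.mem_setOf_eq, Set.mem_empty_iff_false, iff_false]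
        intro hx
        have e23 : ∀ v : G3, v * v = 1 ∨ v * v * v = 1 := by decide
        by_cases h : x * x = 1
        · have h1 : φ x * φ x = 1 := by rw [← map_mul, h, map_one]
          simp only [f1, if_pos h] at hx
          rw [← hx] at h1
          exact (by decide : ¬(r0 * r0 = 1)) h1
        · have h3 : x * x * x = 1 := (e23 x).resolve_left h
          have h1 : φ x * φ x * φ x = 1 := by rw [← map_mul, ← map_mul, h3, map_one]
          simp only [f1, if_neg h] at hx
          rw [← hx] at h1
          exact (by decide : ¬(s0 * s0 * s0 = 1)) h1
      rw [hempty, Set.ncard_empty]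
    · rintro rfl
      refine ⟨1, ?_⟩
      have hempty : {x | f1 x = (1 : G3 →* G3) x} = ∅ := by
        ext x
        simp only [Set.mem_setOf_eq, MonoidHom.one_apply, Set.mem_empty_iff_false, iff_false]
        intro hx
        simp only [f1] at hx
        split_ifs at hx
        · exact (by decide : r0 ≠ 1) hx
        · exact (by decide : s0 ≠ 1) hx
      rw [hempty, Set.ncard_empty]
  rw [enapp, hset, csSup_singleton]

/-- For `Sym₃ = D₆ = ⟨r, s⟩` with `r = (0 1 2)` and `s = (0 1)`: the minimum affine
approximability equals 2, there is no universal element, the minimum endomorphic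
approximability equals 0, and the explicit function `f` with `f(1)=1, f(r)=r, f(r²)=r,
f(s)=1, f(sr)=r², f(sr²)=r²` agrees with no affine map on any 3-element subset. -/
theorem stmt_17 :
    sInf (Set.range (affapp (G := Equiv.Perm (Fin 3)))) = 2 ∧
    (¬∃ u : Equiv.Perm (Fin 3), ∀ g : Equiv.Perm (Fin 3),
      ∃ φ : Equiv.Perm (Fin 3) →* Equiv.Perm (Fin 3), φ u = g) ∧
    sInf (Set.range (enapp (G := Equiv.Perm (Fin 3)))) = 0 ∧
    (let r : Equiv.Perm (Fin 3) := finRotate 3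
     let s : Equiv.Perm (Fin 3) := Equiv.swap 0 1
     let f : Equiv.Perm (Fin 3) → Equiv.Perm (Fin 3) := fun x =>
       if x = 1 then 1 else if x = r then r else if x = r ^ 2 then r
       else if x = s then 1 else if x = s * r then r ^ 2 else r ^ 2
     ∀ (X : Set (Equiv.Perm (Fin 3))), X.ncard = 3 →
       ∀ (a : Equiv.Perm (Fin 3)) (φ : Equiv.Perm (Fin 3) →* Equiv.Perm (Fin 3)),
         ¬∀ x ∈ X, f x = a * φ x) := by
  refine ⟨?_, no_universal, ?_, ?_⟩
  · refine le_antisymm ?_ (le_csInf (Set.range_nonempty _) ?_)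
    · have h0 : affapp f0 ∈ Set.range (affapp (G := Equiv.Perm (Fin 3))) := ⟨f0, rfl⟩
      have := Nat.sInf_le h0
      rwa [affapp_f0] at this
    · rintro n ⟨f, rfl⟩
      exact two_le_affapp f
  · exact Nat.sInf_eq_zero.mpr (Or.inl ⟨f1, enapp_f1⟩)
  · exact part4
end

section
/- Let G be a nontrivial finite group. Then there exists a function g : G → G such that for every affine map A of G (a map x ↦ a·φ(x) with a ∈ G, φ ∈ End(G)), the number of x ∈ G with g(x) = A(x) is at most (1/log 2 + 2/log|G|)·(log|G|)². In particular, the minimum affine approximability of G is o(|G|) as |G| → ∞. -/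
/-! An endomorphism of `G` is determined by its values on a generating set, and `G` has a
generating set of at most `log₂ |G|` elements, since each non-redundant generator at least doubles
the subgroup generated so far; hence there are at most `n ^ (1 + log₂ n)` affine maps, `n = |G|`.
A fixed map agrees on at least `t` points with at most `C(n, t) n ^ (n - t) ≤ n ^ n / t!` of the
`n ^ n` functions `G → G`, so once there are fewer than `t!` affine maps some function agrees with
each of them on fewer than `t` points. For `t = ⌊k⌋ + 1`, `k` the bound of the theorem,
`n ^ (1 + log₂ n) < t!` follows from `exp t ≤ t!` when `n ≥ 4`, while `n ≤ k` already when
`n ≤ 3`. -/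

open Finset Fintype Real

namespace Subgroup

variable {G : Type*} [Group G] [Finite G]

lemma two_mul_card_le_card_of_lt {H K : Subgroup G} (h : H < K) :
    2 * Nat.card H ≤ Nat.card K := by
  obtain ⟨c, hc⟩ := card_dvd_of_le h.le
  have hlt : Nat.card H < Nat.card K :=
    lt_of_not_ge fun hge => h.ne (eq_of_le_of_card_ge h.le hge)
  have hpos : 0 < Nat.card H := Nat.card_pos
  rw [hc] at hlt ⊢
  have hc : 2 ≤ c := by
    by_contra! hc
    interval_cases c <;> simp at hlt
  nlinarith

lemma exists_subset_closure_eq_two_pow_card_le [DecidableEq G] (T : Finset G) :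
    ∃ S ⊆ T, closure (S : Set G) = closure T ∧
      2 ^ #S ≤ Nat.card (closure (T : Set G)) := by
  induction T using Finset.induction_on with
  | empty => exact ⟨∅, subset_rfl, rfl, by simp⟩
  | insert a T _ ih =>
    obtain ⟨S, hST, hS, hcard⟩ := ih
    have hclosure (U : Finset G) :
        closure (insert a U : Finset G) = closure {a} ⊔ closure U := by
      rw [coe_insert, Set.insert_eq, closure_union]
    by_cases ha : a ∈ closure (T : Set G)
    · have hT : closure (insert a T : Finset G) = closure (T : Set G) := by
        rw [hclosure, sup_eq_right, closure_le, Set.singleton_subset_iff]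
        exact ha
      exact ⟨S, hST.trans (subset_insert _ _), hS.trans hT.symm, hT ▸ hcard⟩
    · have hlt : closure (T : Set G) < closure (insert a T : Finset G) :=
        lt_of_le_of_ne (closure_mono (by simp)) fun h =>
          ha (h ▸ subset_closure (by simp))
      refine ⟨insert a S, insert_subset_insert a hST, by rw [hclosure, hclosure, hS], ?_⟩
      calc 2 ^ #(insert a S) ≤ 2 * 2 ^ #S := by
            rw [← pow_succ']; exact Nat.pow_le_pow_right two_pos (card_insert_le a S)
        _ ≤ 2 * Nat.card (closure (T : Set G)) := by omega
        _ ≤ _ := two_mul_card_le_card_of_lt hlt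

end Subgroup

lemma Group.exists_closure_eq_top_two_pow_card_le (G : Type*) [Group G] [Finite G] :
    ∃ S : Finset G, Subgroup.closure (S : Set G) = ⊤ ∧ 2 ^ #S ≤ Nat.card G := by
  classical
  have := Fintype.ofFinite G
  obtain ⟨S, -, hS, hcard⟩ :=
    Subgroup.exists_subset_closure_eq_two_pow_card_le (univ : Finset G)
  rw [coe_univ, Subgroup.closure_univ] at hS hcard
  exact ⟨S, hS, by rwa [Subgroup.card_top] at hcard⟩

lemma MonoidHom.card_le_pow_log (G M : Type*) [Group G] [Finite G] [Monoid M] [Finite M] :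
    Nat.card (G →* M) ≤ Nat.card M ^ Nat.log 2 (Nat.card G) := by
  obtain ⟨S, hS, hcard⟩ := Group.exists_closure_eq_top_two_pow_card_le G
  have hinj : Function.Injective fun (f : G →* M) (s : S) => f s :=
    fun f f' h => eq_of_eqOn_dense hS fun y hy => congrFun h ⟨y, hy⟩
  calc Nat.card (G →* M) ≤ Nat.card (S → M) := Nat.card_le_card_of_injective _ hinj
    _ = Nat.card M ^ #S := by rw [Nat.card_fun, Nat.card_eq_finsetCard]
    _ ≤ _ := Nat.pow_le_pow_right Nat.card_pos (Nat.le_log_of_pow_le one_lt_two hcard)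

section Counting

variable {α β : Type*} [Fintype α] [DecidableEq α] [Fintype β] [DecidableEq β]

lemma card_filter_forall_mem_eq_le (f : α → β) (S : Finset α) :
    #{g : α → β | ∀ x ∈ S, g x = f x} ≤ card β ^ (card α - #S) := by
  have hinj : Set.InjOn (fun (g : α → β) (x : ↥(Sᶜ)) => g x)
      {g : α → β | ∀ x ∈ S, g x = f x} := by
    intro g₁ hg₁ g₂ hg₂ h
    funext x
    by_cases hx : x ∈ S
    · rw [hg₁ x hx, hg₂ x hx]
    · exact congrFun h ⟨x, mem_compl.2 hx⟩
  calc #{g : α → β | ∀ x ∈ S, g x = f x} ≤ card (↥(Sᶜ) → β) :=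
        card_le_card_of_injOn _ (fun _ _ => mem_univ _) (by simpa using hinj)
    _ = card β ^ (card α - #S) := by simp

lemma card_filter_le_card_filter_eq_le_choose_mul_pow (f : α → β) (t : ℕ) :
    #{g : α → β | t ≤ #{x | g x = f x}} ≤ (card α).choose t * card β ^ (card α - t) := by
  have hsub : ({g : α → β | t ≤ #{x | g x = f x}} : Finset (α → β)) ⊆
      (powersetCard t univ).biUnion fun S => {g : α → β | ∀ x ∈ S, g x = f x} := by
    intro g hg
    obtain ⟨S, hS, hcard⟩ := exists_subset_card_eq (mem_filter.1 hg).2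
    simp only [mem_biUnion, mem_powersetCard, mem_filter, mem_univ, true_and]
    exact ⟨S, ⟨subset_univ S, hcard⟩, fun x hx => (mem_filter.1 (hS hx)).2⟩
  calc _ ≤ _ := card_le_card hsub
    _ ≤ ∑ S ∈ powersetCard t univ, #{g : α → β | ∀ x ∈ S, g x = f x} :=
        card_biUnion_le
    _ ≤ ∑ S ∈ powersetCard t (univ : Finset α), card β ^ (card α - t) :=
        sum_le_sum fun S hS => (mem_powersetCard.1 hS).2 ▸ card_filter_forall_mem_eq_le f S
    _ = _ := by simp

lemma exists_forall_card_filter_eq_lt {ι : Type*} [Fintype ι] (f : ι → α → β) (t : ℕ)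
    (h : card ι * ((card α).choose t * card β ^ (card α - t)) < card β ^ card α) :
    ∃ g : α → β, ∀ i, #{x | g x = f i x} < t := by
  set bad := univ.biUnion fun i => {g : α → β | t ≤ #{x | g x = f i x}}
  have hbad : #bad < #(univ : Finset (α → β)) := by
    calc #bad ≤ ∑ i, #{g : α → β | t ≤ #{x | g x = f i x}} := card_biUnion_le
      _ ≤ ∑ _i : ι, (card α).choose t * card β ^ (card α - t) :=
          sum_le_sum fun i _ => card_filter_le_card_filter_eq_le_choose_mul_pow (f i) t
      _ < _ := by simpa using h
  obtain ⟨g, -, hg⟩ := exists_mem_notMem_of_card_lt_card hbad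
  refine ⟨g, fun i => lt_of_not_ge fun hi => hg ?_⟩
  exact mem_biUnion.2 ⟨i, mem_univ i, mem_filter.2 ⟨mem_univ g, hi⟩⟩

end Counting

lemma factorial_mul_choose_mul_pow_sub_le (n t : ℕ) :
    t.factorial * (n.choose t * n ^ (n - t)) ≤ n ^ n := by
  rcases le_or_gt t n with htn | htn
  · calc t.factorial * (n.choose t * n ^ (n - t)) = n.descFactorial t * n ^ (n - t) := by
          rw [Nat.descFactorial_eq_factorial_mul_choose, mul_assoc]
      _ ≤ n ^ t * n ^ (n - t) := Nat.mul_le_mul_right _ (Nat.descFactorial_le_pow n t)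
      _ = n ^ n := by rw [← pow_add, Nat.add_sub_cancel' htn]
  · simp [Nat.choose_eq_zero_of_lt htn]

lemma exists_forall_ncard_eq_lt_of_card_lt_factorial {α ι : Type*} [Finite α] [Finite ι]
    (f : ι → α → α) {t : ℕ} (h : Nat.card ι < t.factorial) :
    ∃ g : α → α, ∀ i, {x | g x = f i x}.ncard < t := by
  classical
  have := Fintype.ofFinite α
  have := Fintype.ofFinite ι
  set n := card α
  obtain ⟨g, hg⟩ : ∃ g : α → α, ∀ i, #{x | g x = f i x} < t := by
    refine exists_forall_card_filter_eq_lt f t ?_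
    rcases Nat.eq_zero_or_pos (n.choose t * n ^ (n - t)) with h0 | hpos
    · rw [h0, mul_zero]
      exact Nat.pow_self_pos
    · rw [Nat.card_eq_fintype_card] at h
      exact (Nat.mul_lt_mul_of_pos_right h hpos).trans_le
        (factorial_mul_choose_mul_pow_sub_le n t)
  exact ⟨g, fun i => by simpa [Set.ncard_eq_toFinset_card'] using hg i⟩

lemma Real.exp_le_factorial {t : ℕ} (ht : 6 ≤ t) : exp t ≤ t.factorial := by
  induction t, ht using Nat.le_induction with
  | base =>
    calc exp ((6 : ℕ) : ℝ) = exp 1 ^ 6 := by rw [← exp_nat_mul]; norm_num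
      _ ≤ 2.7182818286 ^ 6 := pow_le_pow_left₀ (exp_pos 1).le exp_one_lt_d9.le 6
      _ ≤ (Nat.factorial 6 : ℕ) := by norm_num [Nat.factorial]
  | succ t ht ih =>
    have he : exp 1 ≤ t + 1 := by
      have : (6 : ℝ) ≤ t := by exact_mod_cast ht
      linarith [exp_one_lt_d9]
    rw [Nat.cast_succ, exp_add, Nat.factorial_succ, Nat.cast_mul, mul_comm, Nat.cast_succ]
    exact mul_le_mul he ih (exp_pos _).le (by positivity)

noncomputable def affineApproxBound (n : ℕ) : ℝ := (1 / log 2 + 2 / log n) * log n ^ 2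

lemma affineApproxBound_eq {n : ℕ} (hn : 2 ≤ n) :
    affineApproxBound n = log n ^ 2 / log 2 + 2 * log n := by
  unfold affineApproxBound
  have : 0 < log n := log_pos (by exact_mod_cast hn)
  field_simp

lemma le_affineApproxBound {n : ℕ} (h2 : 2 ≤ n) (h3 : n ≤ 3) :
    (n : ℝ) ≤ affineApproxBound n := by
  rw [affineApproxBound_eq h2]
  have hl := log_two_gt_d9
  have hl' := log_two_lt_d9
  interval_cases n
  · push_cast
    rw [sq, mul_div_assoc, div_self (by positivity)]
    linarith
  · have h3 : 1 ≤ log 3 := by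
      rw [le_log_iff_exp_le (by norm_num)]
      linarith [exp_one_lt_d9]
    push_cast
    have : 1 / log 2 ≤ log 3 ^ 2 / log 2 := by gcongr; nlinarith
    have : 1 < 1 / log 2 := by rw [lt_div_iff₀ (by linarith)]; linarith
    linarith

lemma pow_succ_log_lt_factorial {n t : ℕ} (hn : 4 ≤ n) (ht : affineApproxBound n < t) :
    n ^ (1 + Nat.log 2 n) < t.factorial := by
  rw [affineApproxBound_eq (by omega)] at ht
  have hl := log_two_gt_d9
  have hlog : ∀ k : ℕ, 2 ^ k ≤ n → k * log 2 ≤ log n := fun k hk => by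
    rw [← log_pow]; exact log_le_log (by positivity) (by exact_mod_cast hk)
  have hL : 2 * log 2 ≤ log n := hlog 2 hn
  set m := Nat.log 2 n
  have hm : m * log 2 ≤ log n := hlog m (Nat.pow_log_le_self 2 (by omega))
  have ht6 : 6 ≤ t := by
    have : 4 * log 2 ≤ log n ^ 2 / log 2 := by rw [le_div_iff₀ (by linarith)]; nlinarith
    have : (5 : ℝ) < t := by nlinarith
    exact_mod_cast this
  have hmL : m * log n ≤ log n ^ 2 / log 2 := by rw [le_div_iff₀ (by linarith)]; nlinarith
  have : (n : ℝ) ^ (1 + m) < t.factorial :=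
    calc (n : ℝ) ^ (1 + m) = exp ((1 + m) * log n) := by
          rw [← exp_log (by positivity : (0 : ℝ) < n), ← exp_nat_mul, log_exp]
          push_cast
          ring_nf
      _ < exp t := exp_lt_exp.2 (by nlinarith)
      _ ≤ t.factorial := exp_le_factorial ht6
  exact_mod_cast this

/-- For any nontrivial finite group `G`, there is a function `g : G → G` agreeing with
every affine map `x ↦ a * φ x` on at most `(1/log 2 + 2/log |G|) · (log |G|)²` points. -/
theorem stmt_19 {G : Type*} [Group G] [Fintype G] [Nontrivial G] :
    ∃ g : G → G, ∀ (a : G) (φ : G →* G),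
      (Set.ncard {x | g x = a * φ x} : ℝ) ≤
        (1 / Real.log 2 + 2 / Real.log (Fintype.card G)) *
          Real.log (Fintype.card G) ^ 2 := by
  set n := Fintype.card G
  have hn : 2 ≤ n := Fintype.one_lt_card
  by_cases hsmall : n ≤ 3
  · refine ⟨id, fun a φ => ?_⟩
    calc (Set.ncard {x | id x = a * φ x} : ℝ) ≤ n := by
          exact_mod_cast (Set.ncard_le_card _).trans_eq Nat.card_eq_fintype_card
      _ ≤ affineApproxBound n := le_affineApproxBound hn hsmall
  have : Finite (G →* G) := .of_injective _ DFunLike.coe_injective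
  have hcard : Nat.card (G × (G →* G)) < (⌊affineApproxBound n⌋₊ + 1).factorial :=
    calc Nat.card (G × (G →* G)) ≤ n ^ (1 + Nat.log 2 n) := by
          rw [Nat.card_prod, pow_add, pow_one, Nat.card_eq_fintype_card]
          simpa using Nat.mul_le_mul_left n (MonoidHom.card_le_pow_log G G)
      _ < _ := pow_succ_log_lt_factorial (by omega) (by exact_mod_cast Nat.lt_floor_add_one _)
  obtain ⟨g, hg⟩ := exists_forall_ncard_eq_lt_of_card_lt_factorial
    (fun p : G × (G →* G) => fun x => p.1 * p.2 x) hcard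
  refine ⟨g, fun a φ => ?_⟩
  calc (Set.ncard {x | g x = a * φ x} : ℝ) ≤ ⌊affineApproxBound n⌋₊ := by
        exact_mod_cast Nat.lt_succ_iff.1 (hg (a, φ))
    _ ≤ affineApproxBound n := Nat.floor_le (by rw [affineApproxBound_eq hn]; positivity)
end
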